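/- Domination principle: let A be measurable with respect to the partition into n-cylinders, ν a finite Radon measure supported in A with 𝔾_r*(ν) well defined (0 < r ≤ R), and μ a 1/r-excessive measure. If μ|_A ≥ 𝔾_r*(ν)|_A, then μ ≥ 𝔾_r*(ν) globally. -/

import Mathlib

/-!
Decompose each path of `(𝓛*)ⁿ ν` at its last visit to `A` (`ν` lives on `A`, so there is one):
`𝔾_r*(ν) = Σᵢ rⁱ ((𝟙_{Aᶜ}𝓛)*)ⁱ (𝔾_r*(ν)|_A) ≤ Σᵢ rⁱ ((𝟙_{Aᶜ}𝓛)*)ⁱ (μ|_A)`.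
The last sum is at most `μ`: if one of its partial sums `R` satisfies `R ≤ μ`, then the next one
is `μ|_A + r (𝟙_{Aᶜ}𝓛)* R ≤ μ|_A + (r 𝓛* μ)|_{Aᶜ} ≤ μ` by excessivity. Since `𝓛*` is only
monotone and finitely additive, the infinite sums are compared through their finite partial sums.
-/

open MeasureTheory Finset
open scoped ENNReal

/-- Last-exit decomposition of `tⁿ` along a splitting `p + q = 1`. -/
theorem pow_eq_sum_antidiagonal_add {R : Type*} [Semiring R] {p q : R} (hpq : p + q = 1)
    (t : R) (n : ℕ) :
    t ^ n = ∑ ij ∈ antidiagonal n, (q * t) ^ ij.1 * p * t ^ ij.2 + (q * t) ^ n * q := by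
  induction n with
  | zero => simp [hpq]
  | succ n ih =>
    calc t ^ (n + 1) = p * t ^ (n + 1) + q * t * t ^ n := by
          rw [mul_assoc q, ← pow_succ', ← add_mul, hpq, one_mul]
      _ = _ := by
          rw [Nat.sum_antidiagonal_succ, ih, mul_add, mul_sum]
          simp only [pow_succ', mul_assoc, pow_zero, one_mul, add_assoc]

theorem Module.End.sum_range_succ_smul_pow_apply {R M : Type*} [CommSemiring R] [AddCommMonoid M]
    [Module R M] (S : Module.End R M) (c : R) (x : M) (n : ℕ) :
    ∑ m ∈ range (n + 1), c ^ m • (S ^ m) x = x + c • S (∑ m ∈ range n, c ^ m • (S ^ m) x) := by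
  rw [sum_range_succ', map_sum, smul_sum, add_comm]
  simp only [pow_succ', mul_smul, map_smul, pow_zero, one_smul, Module.End.mul_apply,
    Module.End.one_apply]

theorem Module.End.monotone_pow {R M : Type*} [Semiring R] [AddCommMonoid M] [Module R M]
    [Preorder M] {T : Module.End R M} (hT : Monotone T) (n : ℕ) : Monotone (T ^ n) := by
  rw [Module.End.coe_pow]
  exact hT.iterate n

namespace MeasureTheory.Measure

variable {X Y ι : Type*} [MeasurableSpace X] [MeasurableSpace Y]

theorem finsetSum_le_sum (f : ι → Measure X) (F : Finset ι) : ∑ i ∈ F, f i ≤ sum f :=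
  le_iff.2 fun s hs => by
    rw [finsetSum_apply, sum_apply _ hs]
    exact ENNReal.sum_le_tsum F

theorem sum_le_of_forall_finsetSum_le {f : ι → Measure X} {μ : Measure X}
    (h : ∀ F : Finset ι, ∑ i ∈ F, f i ≤ μ) : sum f ≤ μ :=
  le_iff.2 fun s hs => by
    rw [sum_apply _ hs, ENNReal.tsum_eq_iSup_sum]
    exact iSup_le fun F => by simpa only [finsetSum_apply] using le_iff'.1 (h F) s

theorem sum_le_of_forall_sum_range_le {f : ℕ → Measure X} {μ : Measure X}
    (h : ∀ n, ∑ i ∈ range n, f i ≤ μ) : sum f ≤ μ :=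
  le_iff.2 fun s hs => by
    rw [sum_apply _ hs]
    exact ENNReal.tsum_le_of_sum_range_le fun n => by
      simpa only [finsetSum_apply] using le_iff'.1 (h n) s

theorem sum_mono {f g : ι → Measure X} (h : ∀ i, f i ≤ g i) : sum f ≤ sum g :=
  le_iff.2 fun s hs => by
    simp only [sum_apply _ hs]
    exact ENNReal.tsum_le_tsum fun i => le_iff'.1 (h i) s

theorem sum_apply_le_apply_sum {U : Measure X →ₗ[ℝ≥0∞] Measure Y} (hU : Monotone U)
    (η : ι → Measure X) : sum (fun i => U (η i)) ≤ U (sum η) :=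
  sum_le_of_forall_finsetSum_le fun F => by
    rw [← _root_.map_sum]
    exact hU (finsetSum_le_sum η F)

theorem sum_sum_antidiagonal (f : ℕ × ℕ → Measure X) :
    sum (fun n => ∑ ij ∈ antidiagonal n, f ij) = sum f := by
  ext s hs
  simp only [sum_apply _ hs, finsetSum_apply]
  rw [← HasAntidiagonal.sigmaAntidiagonalEquivProd.tsum_eq, ENNReal.tsum_sigma']
  exact tsum_congr fun n => (Finset.tsum_subtype _ _).symm

/-- The dual of `𝟙_{Aᶜ} 𝓛`: one step of `T`, after which mass landing in `A` is discarded. -/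
noncomputable def taboo (A : Set X) (T : Module.End ℝ≥0∞ (Measure X)) :
    Module.End ℝ≥0∞ (Measure X) :=
  restrictₗ Aᶜ * T

noncomputable def potential (c : ℝ≥0∞) (T : Module.End ℝ≥0∞ (Measure X)) (ν : Measure X) :
    Measure X :=
  sum fun n => c ^ n • (T ^ n) ν

variable {T : Module.End ℝ≥0∞ (Measure X)} {A : Set X} {c : ℝ≥0∞} {μ ν : Measure X}

theorem taboo_apply (A : Set X) (T : Module.End ℝ≥0∞ (Measure X)) (μ : Measure X) :
    taboo A T μ = (T μ).restrict Aᶜ :=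
  rfl

theorem monotone_taboo (hT : Monotone T) : Monotone (taboo A T) :=
  fun _ _ h => restrict_mono subset_rfl (hT h)

theorem sum_smul_pow_taboo_restrict_le (hT : Monotone T) (hA : MeasurableSet A)
    (hexc : c • T μ ≤ μ) :
    sum (fun m => c ^ m • (taboo A T ^ m) (μ.restrict A)) ≤ μ := by
  refine sum_le_of_forall_sum_range_le fun n => ?_
  induction n with
  | zero => simpa using μ.zero_le
  | succ n ih =>
    rw [Module.End.sum_range_succ_smul_pow_apply]
    calc μ.restrict A + c • taboo A T (∑ m ∈ range n, c ^ m • (taboo A T ^ m) (μ.restrict A))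
        ≤ μ.restrict A + c • taboo A T μ := by gcongr; exact monotone_taboo hT ih
      _ ≤ μ.restrict A + μ.restrict Aᶜ := by
          rw [taboo_apply, ← restrict_smul]
          gcongr
      _ = μ := restrict_add_restrict_compl hA

theorem pow_apply_eq_sum_antidiagonal_taboo (hA : MeasurableSet A) (hν : ν Aᶜ = 0) (n : ℕ) :
    (T ^ n) ν = ∑ ij ∈ antidiagonal n, (taboo A T ^ ij.1) (((T ^ ij.2) ν).restrict A) := by
  have hsplit : restrictₗ A + restrictₗ Aᶜ = (1 : Module.End ℝ≥0∞ (Measure X)) :=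
    LinearMap.ext fun μ => restrict_add_restrict_compl hA
  simpa only [taboo, LinearMap.add_apply, LinearMap.sum_apply, Module.End.mul_apply,
    restrictₗ_apply, restrict_eq_zero.2 hν, map_zero, add_zero] using
    LinearMap.congr_fun (pow_eq_sum_antidiagonal_add hsplit T n) ν

theorem potential_le_of_restrict_le (hT : Monotone T) (hA : MeasurableSet A) (hν : ν Aᶜ = 0)
    (hexc : c • T μ ≤ μ) (hdom : (potential c T ν).restrict A ≤ μ.restrict A) :
    potential c T ν ≤ μ := by
  set S := taboo A T
  have hS : ∀ i : ℕ, Monotone ⇑(S ^ i) := Module.End.monotone_pow (monotone_taboo hT)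
  have hU : ∀ i : ℕ, Monotone ⇑(c ^ i • (S ^ i * restrictₗ A)) := fun i _ _ h => by
    simp only [LinearMap.smul_apply, Module.End.mul_apply, restrictₗ_apply]
    gcongr
    exact hS i (restrict_mono subset_rfl h)
  calc potential c T ν
      = sum fun ij : ℕ × ℕ => (c ^ ij.1 • (S ^ ij.1 * restrictₗ A)) (c ^ ij.2 • (T ^ ij.2) ν) := by
        rw [← sum_sum_antidiagonal]
        refine congrArg sum (funext fun n => ?_)
        rw [pow_apply_eq_sum_antidiagonal_taboo hA hν, smul_sum]
        refine Finset.sum_congr rfl fun ij hij => ?_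
        rw [← mem_antidiagonal.1 hij, pow_add, mul_smul, LinearMap.smul_apply, Module.End.mul_apply,
          map_smul, map_smul, restrictₗ_apply]
    _ = sum fun i => sum fun j => (c ^ i • (S ^ i * restrictₗ A)) (c ^ j • (T ^ j) ν) :=
        (sum_sum fun i j => (c ^ i • (S ^ i * restrictₗ A)) (c ^ j • (T ^ j) ν)).symm
    _ ≤ sum fun i => c ^ i • (S ^ i) ((potential c T ν).restrict A) :=
        sum_mono fun i => sum_apply_le_apply_sum (hU i) _
    _ ≤ sum fun i => c ^ i • (S ^ i) (μ.restrict A) :=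
        sum_mono fun i => by gcongr; exact hS i hdom
    _ ≤ μ := sum_smul_pow_taboo_restrict_le hT hA hexc

end MeasureTheory.Measure

theorem domination_principle_general
    {X : Type*} [MeasurableSpace X]
    (Ldual : Measure X → Measure X)
    (hmono : Monotone Ldual)
    (hadd : ∀ μ ν : Measure X, Ldual (μ + ν) = Ldual μ + Ldual ν)
    (hsmul : ∀ (c : ℝ≥0∞) (μ : Measure X), Ldual (c • μ) = c • Ldual μ)
    (r : ℝ) (hr : 0 < r)
    (A : Set X) (hA : MeasurableSet A)
    (ν : Measure X)
    (hsupp : ν Aᶜ = 0)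
    (μ : Measure X)
    (hexc : Ldual μ ≤ (ENNReal.ofReal r)⁻¹ • μ)
    (hdom : (Measure.sum fun n : ℕ =>
        ENNReal.ofReal (r ^ n) • Ldual^[n] ν).restrict A ≤ μ.restrict A) :
    (Measure.sum fun n : ℕ => ENNReal.ofReal (r ^ n) • Ldual^[n] ν) ≤ μ := by
  let T : Module.End ℝ≥0∞ (Measure X) := ⟨⟨Ldual, hadd⟩, hsmul⟩
  have hpot : (Measure.sum fun n : ℕ => ENNReal.ofReal (r ^ n) • Ldual^[n] ν)
      = Measure.potential (ENNReal.ofReal r) T ν := by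
    simp only [Measure.potential, Module.End.coe_pow, ENNReal.ofReal_pow hr.le]
    rfl
  have hexc' : ENNReal.ofReal r • T μ ≤ μ :=
    calc ENNReal.ofReal r • Ldual μ ≤ ENNReal.ofReal r • (ENNReal.ofReal r)⁻¹ • μ := by gcongr
      _ = μ := by
        rw [smul_smul, ENNReal.mul_inv_cancel (by simpa using hr) ENNReal.ofReal_ne_top, one_smul]
  rw [hpot] at hdom ⊢
  exact Measure.potential_le_of_restrict_le hmono hA hsupp hexc' hdom

/-- **domination principle.** Let `A` be a union of `n`-cylinders, `ν` a
finite Radon measure supported in `A` with well-defined (σ-finite) potential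
`𝔾_r*(ν) = Σ_n r^n (𝓛*)^n ν`, `0 < r ≤ R`, and `μ` a `1/r`-excessive measure. If
`μ|_A ≥ 𝔾_r*(ν)|_A`, then `μ ≥ 𝔾_r*(ν)` globally. -/
theorem domination_principle
    {X : Type*} [MeasurableSpace X]
    (Ldual : Measure X → Measure X)
    (hmono : Monotone Ldual)
    (hadd : ∀ μ ν : Measure X, Ldual (μ + ν) = Ldual μ + Ldual ν)
    (hsmul : ∀ (c : ℝ≥0∞) (μ : Measure X), Ldual (c • μ) = c • Ldual μ)
    (r : ℝ) (hr : 0 < r)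
    (A : Set X) (hA : MeasurableSet A)
    (ν : Measure X) [IsFiniteMeasure ν]
    (hsupp : ν Aᶜ = 0)
    (hwd : SigmaFinite (Measure.sum fun n : ℕ => ENNReal.ofReal (r ^ n) • Ldual^[n] ν))
    (μ : Measure X)
    (hexc : Ldual μ ≤ (ENNReal.ofReal r)⁻¹ • μ)
    (hdom : (Measure.sum fun n : ℕ =>
        ENNReal.ofReal (r ^ n) • Ldual^[n] ν).restrict A ≤ μ.restrict A) :
    (Measure.sum fun n : ℕ => ENNReal.ofReal (r ^ n) • Ldual^[n] ν) ≤ μ :=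
  domination_principle_general Ldual hmono hadd hsmul r hr A hA ν hsupp μ hexc hdom
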